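/- arXiv:2411.13646 — 3 statements merged into one kernel-verified Lean document; each statement's English description precedes it below -/
import Mathlib

section
/- Let m ≥ 5 be odd and let i > j. Then the following identities hold modulo 2: (1) (A_{ar} H)_{ij} ≡ (H A_{ar}ᵀ)_{ij} for all a = 2,3,…,m and r = 1,2; (2) (A_{12} H)_{ij} ≡ 0; (3) (H A_{11}ᵀ)_{ij} ≡ 0. -/
open Matrix

/-- `bwBit i a` is the `a`-th binary digit of `i`. -/
def bwBit (i a : ℕ) : ℕ := i / 2 ^ a % 2

/-- `bwPar m i` is the number of zero digits in the length-`m` binary expansion of `i`, mod 2. -/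
def bwPar (m i : ℕ) : ℕ := ((Finset.range m).filter fun a => bwBit i a = 0).card % 2

/-- The exponent of `√2` in the `(i,j)` entry of the Gram matrix of `BW(m)`. -/
def bwExp (m i j : ℕ) : ℤ :=
  (bwPar m i : ℤ) + (bwPar m j : ℤ) - 2 * (((m + 1) / 2 : ℕ) : ℤ) +
    ∑ l ∈ Finset.range m,
      (2 * (bwBit i l : ℤ) * (bwBit j l : ℤ) - (bwBit i l : ℤ) - (bwBit j l : ℤ) + 2)

/-- The Gram matrix of the Barnes-Wall lattice `BW(m)`:
`G i j = (w_i, w_j) = √2 ^ (p i + p j - 2⌈m/2⌉ + ∑ (2 i[l] j[l] - i[l] - j[l] + 2))`. -/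
noncomputable def bwGram (m : ℕ) : Matrix (Fin (2 ^ m)) (Fin (2 ^ m)) ℝ :=
  Matrix.of fun i j => Real.sqrt 2 ^ bwExp m (i : ℕ) (j : ℕ)

/-- The matrix of the lattice automorphism `Σ_{ar}` of `BW(m)` in the basis `w_i`
(acting on row vectors from the right); `r = 1` gives `Σ_{a1}`, any other `r` gives `Σ_{a2}`. -/
def bwSigma (m a r : ℕ) : Matrix (Fin (2 ^ m)) (Fin (2 ^ m)) ℤ :=
  Matrix.of fun i j =>
    if r = 1 then
      if bwBit (i : ℕ) (m - a) = 0 then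
        (if j = i then -1 else 0) +
          (if (j : ℕ) = (i : ℕ) + 2 ^ (m - a) then 2 ^ bwPar m (i : ℕ) else 0)
      else if j = i then 1 else 0
    else
      if bwBit (i : ℕ) (m - a) = 1 then
        (if j = i then -1 else 0) +
          (if (j : ℕ) + 2 ^ (m - a) = (i : ℕ) then 2 ^ bwPar m (i : ℕ) else 0)
      else if j = i then 1 else 0

/-- `A_{ar} = Σ_{ar} - I`. -/
def bwA (m a r : ℕ) : Matrix (Fin (2 ^ m)) (Fin (2 ^ m)) ℤ := bwSigma m a r - 1

/-- The half-Gram matrix `H` of `BW(m)`: `H i j = G i j` for `i > j`, `G i i / 2` on the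
diagonal, and `0` above the diagonal. -/
noncomputable def bwH (m : ℕ) : Matrix (Fin (2 ^ m)) (Fin (2 ^ m)) ℝ :=
  Matrix.of fun i j =>
    if j < i then Real.sqrt 2 ^ bwExp m (i : ℕ) (j : ℕ)
    else if i = j then Real.sqrt 2 ^ (bwExp m (i : ℕ) (i : ℕ) - 2)
    else 0

/-- The matrix `H - Σ H Σᵀ` underlying the bilinear form `B_Σ`. -/
noncomputable def bwBMat (m : ℕ) (S : Matrix (Fin (2 ^ m)) (Fin (2 ^ m)) ℤ) :
    Matrix (Fin (2 ^ m)) (Fin (2 ^ m)) ℝ :=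
  bwH m - S.map (Int.cast : ℤ → ℝ) * bwH m * (S.map (Int.cast : ℤ → ℝ))ᵀ

/-- The bilinear form `B_Σ(α, β) = ∑_{i > j} α_i β_j (H - Σ H Σᵀ)_{ij}`. -/
noncomputable def bwBQuad (m : ℕ) (S : Matrix (Fin (2 ^ m)) (Fin (2 ^ m)) ℤ)
    (α β : Fin (2 ^ m) → ℤ) : ℝ :=
  ∑ i, ∑ j, if j < i then (α i : ℝ) * (β j : ℝ) * bwBMat m S i j else 0

/-- `u_Σ(α) = (-1)^{B_Σ(α,α)}`, rendered as `cos (π B_Σ(α,α))`, which agrees with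
`(-1)^k` whenever `B_Σ(α,α)` is the integer `k`. -/
noncomputable def bwU (m : ℕ) (S : Matrix (Fin (2 ^ m)) (Fin (2 ^ m)) ℤ)
    (α : Fin (2 ^ m) → ℤ) : ℝ :=
  Real.cos (Real.pi * bwBQuad m S α α)

open Finset

/-!
Over `ZMod 2` the half-Gram matrix is the 0/1 matrix supported on the entries `y < x` with
`p x + p y + (number of digits in which x and y agree) = 1`; its diagonal is even since `m ≥ 5`.
Modulo 2, a row `x` of `A_{ar}` has at most one nonzero entry, at the index obtained by flipping
digit `m - a`, and only when `p x = 0`. Flipping a digit changes `p`, so an odd term forces the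
flipped index and the other one to be complementary, and flipping on the left or on the right
produces the same complementary pair. The order of two complementary numbers is decided by the top
digit, which the flip of digit `m - a` leaves alone for `a ≥ 2`; for `a = 1` it reverses the
order, so those entries are even.
-/
theorem Nat.xor_two_pow_eq_add {x b : ℕ} (h : x.testBit b = false) :
    x ^^^ 2 ^ b = x + 2 ^ b := by
  refine Nat.eq_of_testBit_eq fun l => ?_
  rw [Nat.testBit_xor, Nat.testBit_two_pow]
  rcases lt_or_ge l b with hl | hl
  · rw [add_comm, Nat.testBit_two_pow_add_gt hl, decide_eq_false (by omega), Bool.xor_false]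
  · obtain ⟨d, rfl⟩ := Nat.exists_eq_add_of_le hl
    have heven : Even (x / 2 ^ b) := by
      rw [Nat.even_iff]
      simpa [Nat.testBit_eq_decide_div_mod_eq] using h
    rw [add_comm b d, ← Nat.testBit_div_two_pow, ← Nat.testBit_div_two_pow,
      Nat.add_div_right _ (Nat.two_pow_pos b), ← Nat.xor_one_of_even heven, Nat.testBit_xor,
      ← pow_zero 2, Nat.testBit_two_pow]
    simp [eq_comm]

theorem Nat.xor_two_pow_add_two_pow {x b : ℕ} (h : x.testBit b = true) :
    (x ^^^ 2 ^ b) + 2 ^ b = x := by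
  have hb : (x ^^^ 2 ^ b).testBit b = false := by
    rw [Nat.testBit_xor, Nat.testBit_two_pow_self, h]; rfl
  rw [← Nat.xor_two_pow_eq_add hb, Nat.xor_assoc, Nat.xor_self, Nat.xor_zero]

theorem bwBit_eq_toNat_testBit (x l : ℕ) : bwBit x l = (x.testBit l).toNat := by
  rw [bwBit, Nat.testBit_eq_decide_div_mod_eq]
  rcases Nat.mod_two_eq_zero_or_one (x / 2 ^ l) with h | h <;> simp [h]

theorem bwPar_eq (m x : ℕ) : bwPar m x = #{l ∈ range m | x.testBit l = false} % 2 := by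
  simp [bwPar, bwBit_eq_toNat_testBit]

def bitAgree (m x y : ℕ) : ℕ := #{l ∈ range m | x.testBit l = y.testBit l}

theorem bitAgree_self (m x : ℕ) : bitAgree m x x = m := by
  simp [bitAgree]

theorem bitAgree_xor_two_pow_self {m b : ℕ} (hb : b < m) (x : ℕ) :
    bitAgree m x (x ^^^ 2 ^ b) = m - 1 := by
  have : {l ∈ range m | x.testBit l = (x ^^^ 2 ^ b).testBit l} = (range m).erase b := by
    ext l
    by_cases hl : b = l <;> simp [Nat.testBit_two_pow, hl, Ne.symm]
  rw [bitAgree, this, Finset.card_erase_of_mem (Finset.mem_range.2 hb), Finset.card_range]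

theorem bitAgree_xor_two_pow_left (m b x y : ℕ) :
    bitAgree m (x ^^^ 2 ^ b) y = bitAgree m x (y ^^^ 2 ^ b) := by
  unfold bitAgree
  congr 1
  refine Finset.filter_congr fun l _ => ?_
  simp only [Nat.testBit_xor]
  cases x.testBit l <;> cases y.testBit l <;> cases (2 ^ b).testBit l <;> decide

theorem bitAgree_eq_zero_iff {m x y : ℕ} :
    bitAgree m x y = 0 ↔ ∀ l < m, x.testBit l ≠ y.testBit l := by
  simp [bitAgree, Finset.card_eq_zero, Finset.filter_eq_empty_iff]

theorem lt_iff_testBit_of_bitAgree_eq_zero {m x y : ℕ} (hm : 0 < m) (hx : x < 2 ^ m)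
    (hy : y < 2 ^ m) (h : bitAgree m x y = 0) : y < x ↔ x.testBit (m - 1) = true := by
  have htop := bitAgree_eq_zero_iff.1 h (m - 1) (by omega)
  have hhigh : ∀ l, m - 1 < l → ∀ z < 2 ^ m, z.testBit l = false := fun l hl z hz =>
    Nat.testBit_lt_two_pow (hz.trans_le (Nat.pow_le_pow_right two_pos (by omega)))
  cases hxt : x.testBit (m - 1)
  · refine iff_of_false (fun hyx => ?_) Bool.false_ne_true
    refine (Nat.lt_of_testBit (m - 1) hxt (by simpa [hxt] using htop) fun l hl => ?_).not_gt hyx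
    rw [hhigh l hl x hx, hhigh l hl y hy]
  · refine iff_of_true
      (Nat.lt_of_testBit (m - 1) (by simpa [hxt] using htop) hxt fun l hl => ?_) rfl
    rw [hhigh l hl x hx, hhigh l hl y hy]

theorem bwPar_add_bwPar_add_bitAgree_mod_two (m x y : ℕ) :
    (bwPar m x + bwPar m y + bitAgree m x y) % 2 = m % 2 := by
  -- every digit contributes 1 or 3 to the sum of the three counts
  have h : (#{l ∈ range m | x.testBit l = false} + #{l ∈ range m | y.testBit l = false} +
      bitAgree m x y) % 2 = m % 2 := by
    rw [bitAgree, Finset.card_filter, Finset.card_filter, Finset.card_filter,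
      ← Finset.sum_add_distrib, ← Finset.sum_add_distrib, Finset.sum_nat_mod,
      Finset.sum_congr rfl fun l _ => show _ % 2 = 1 by
        cases x.testBit l <;> cases y.testBit l <;> decide]
    simp
  rw [bwPar_eq, bwPar_eq]
  omega

theorem bwPar_xor_two_pow_add_bwPar {m b : ℕ} (hb : b < m) (x : ℕ) :
    bwPar m (x ^^^ 2 ^ b) + bwPar m x = 1 := by
  have h := bwPar_add_bwPar_add_bitAgree_mod_two m x (x ^^^ 2 ^ b)
  rw [bitAgree_xor_two_pow_self hb] at h
  have h1 : bwPar m x < 2 := Nat.mod_lt _ two_pos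
  have h2 : bwPar m (x ^^^ 2 ^ b) < 2 := Nat.mod_lt _ two_pos
  omega

def bwHalfExp (m x y : ℕ) : ℕ := (bwPar m x + bwPar m y + bitAgree m x y) / 2

theorem bwExp_eq_two_mul_bwHalfExp {m : ℕ} (hm : Odd m) (x y : ℕ) :
    bwExp m x y = 2 * bwHalfExp m x y := by
  have hterm : ∀ l, 2 * (bwBit x l : ℤ) * bwBit y l - bwBit x l - bwBit y l + 2
      = 1 + if x.testBit l = y.testBit l then 1 else 0 := fun l => by
    rw [bwBit_eq_toNat_testBit, bwBit_eq_toNat_testBit]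
    cases x.testBit l <;> cases y.testBit l <;> rfl
  have hsum := bwPar_add_bwPar_add_bitAgree_mod_two m x y
  obtain ⟨t, rfl⟩ := hm
  rw [bwExp, Finset.sum_congr rfl fun l _ => hterm l, Finset.sum_add_distrib, Finset.sum_boole,
    Finset.sum_const, Finset.card_range, bwHalfExp, bitAgree]
  rw [bitAgree] at hsum
  have : (2 * t + 1 + 1) / 2 = t + 1 := by omega
  rw [this, nsmul_eq_mul, mul_one]
  push_cast
  omega

theorem bwHalfExp_eq_zero_iff {m : ℕ} (hm : Odd m) {x y : ℕ} :
    bwHalfExp m x y = 0 ↔ bwPar m x + bwPar m y + bitAgree m x y = 1 := by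
  have h := bwPar_add_bwPar_add_bitAgree_mod_two m x y
  rw [Nat.odd_iff.1 hm] at h
  rw [bwHalfExp]
  omega

theorem div_two_le_bwHalfExp_self (m x : ℕ) : m / 2 ≤ bwHalfExp m x x := by
  rw [bwHalfExp, bitAgree_self]
  omega

def bwHInt (m : ℕ) : Matrix (Fin (2 ^ m)) (Fin (2 ^ m)) ℤ :=
  Matrix.of fun x y =>
    if y < x then 2 ^ bwHalfExp m x y
    else if x = y then 2 ^ (bwHalfExp m x x - 1)
    else 0

theorem sqrt_two_zpow_two_mul (n : ℕ) : Real.sqrt 2 ^ (2 * (n : ℤ)) = 2 ^ n := by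
  rw [_root_.zpow_mul, zpow_two, Real.mul_self_sqrt zero_le_two, zpow_natCast]

theorem bwH_eq_map_bwHInt {m : ℕ} (hm : Odd m) (hm1 : 1 < m) :
    bwH m = (bwHInt m).map (Int.cast : ℤ → ℝ) := by
  ext x y
  simp only [bwH, bwHInt, Matrix.map_apply, Matrix.of_apply]
  split_ifs
  · rw [bwExp_eq_two_mul_bwHalfExp hm]
    push_cast
    exact sqrt_two_zpow_two_mul _
  · have h1 := div_two_le_bwHalfExp_self m x
    have h2 : bwExp m x x - 2 = 2 * ((bwHalfExp m x x - 1 : ℕ) : ℤ) := by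
      rw [bwExp_eq_two_mul_bwHalfExp hm]
      omega
    rw [h2]
    push_cast
    exact sqrt_two_zpow_two_mul _
  · simp

theorem intCast_bwHInt_zmod_two {m : ℕ} (hm : 5 ≤ m) (x y : Fin (2 ^ m)) :
    ((bwHInt m x y : ℤ) : ZMod 2) = if (y : ℕ) < x ∧ bwHalfExp m x y = 0 then 1 else 0 := by
  have hdiag := div_two_le_bwHalfExp_self m x
  have h2 : (2 : ZMod 2) = 0 := rfl
  simp only [bwHInt, Matrix.of_apply, Fin.lt_def]
  push_cast
  rw [h2]
  split_ifs <;> simp_all [zero_pow_eq]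
  omega

theorem intCast_bwA_zmod_two (m a r : ℕ) (x k : Fin (2 ^ m)) :
    ((bwA m a r x k : ℤ) : ZMod 2) =
      if (x : ℕ).testBit (m - a) = decide (r ≠ 1) ∧ (k : ℕ) = x ^^^ 2 ^ (m - a) then
        2 ^ bwPar m x
      else 0 := by
  have hk : k = x ↔ (k : ℕ) = x := Fin.val_inj.symm
  simp only [bwA, bwSigma, Matrix.sub_apply, Matrix.of_apply, Matrix.one_apply,
    bwBit_eq_toNat_testBit, eq_comm (a := x), hk]
  by_cases hr : r = 1
  · cases hx : (x : ℕ).testBit (m - a)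
    · simp [hr, Nat.xor_two_pow_eq_add hx]
    · simp [hr]
  · cases hx : (x : ℕ).testBit (m - a)
    · simp [hr]
    · have : (k : ℕ) + 2 ^ (m - a) = x ↔ (k : ℕ) = x ^^^ 2 ^ (m - a) := by
        have := Nat.xor_two_pow_add_two_pow hx
        omega
      simp [hr, this]

theorem sum_intCast_bwA_mul {m a : ℕ} (ha : m - a < m) (r : ℕ) (x : Fin (2 ^ m))
    (f : ℕ → ZMod 2) :
    ∑ k : Fin (2 ^ m), ((bwA m a r x k : ℤ) : ZMod 2) * f k =
      if (x : ℕ).testBit (m - a) = decide (r ≠ 1) ∧ bwPar m x = 0 then f (x ^^^ 2 ^ (m - a))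
      else 0 := by
  have hn : (x : ℕ) ^^^ 2 ^ (m - a) < 2 ^ m :=
    Nat.xor_lt_two_pow x.isLt (Nat.pow_lt_pow_right one_lt_two ha)
  have hk : ∀ k : Fin (2 ^ m), (k : ℕ) = x ^^^ 2 ^ (m - a) ↔ k = ⟨_, hn⟩ :=
    fun k => ⟨fun h => Fin.ext h, fun h => by rw [h]⟩
  have h2 : (2 : ZMod 2) = 0 := rfl
  rw [Finset.sum_eq_single_of_mem ⟨_, hn⟩ (Finset.mem_univ _) fun k _ hne => by
    simp [intCast_bwA_zmod_two, hk, hne]]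
  simp only [intCast_bwA_zmod_two, and_true, h2, zero_pow_eq]
  split_ifs <;> simp_all

theorem intCast_bwA_mul_bwHInt_apply {m a : ℕ} (hm : 5 ≤ m) (ha : m - a < m) (r : ℕ)
    (i j : Fin (2 ^ m)) :
    (((bwA m a r * bwHInt m) i j : ℤ) : ZMod 2) =
      if (i : ℕ).testBit (m - a) = decide (r ≠ 1) ∧ bwPar m i = 0 ∧
        (j : ℕ) < i ^^^ 2 ^ (m - a) ∧ bwHalfExp m (i ^^^ 2 ^ (m - a)) j = 0 then 1 else 0 := by
  rw [Matrix.mul_apply]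
  push_cast
  simp_rw [intCast_bwHInt_zmod_two hm]
  rw [sum_intCast_bwA_mul ha r i fun n => if (j : ℕ) < n ∧ bwHalfExp m n j = 0 then 1 else 0]
  simp only [← and_assoc, ite_and]

theorem intCast_bwHInt_mul_bwA_transpose_apply {m a : ℕ} (hm : 5 ≤ m) (ha : m - a < m)
    (r : ℕ) (i j : Fin (2 ^ m)) :
    (((bwHInt m * (bwA m a r)ᵀ) i j : ℤ) : ZMod 2) =
      if (j : ℕ).testBit (m - a) = decide (r ≠ 1) ∧ bwPar m j = 0 ∧
        (j : ℕ) ^^^ 2 ^ (m - a) < i ∧ bwHalfExp m i (j ^^^ 2 ^ (m - a)) = 0 then 1 else 0 := by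
  rw [Matrix.mul_apply]
  push_cast
  simp_rw [Matrix.transpose_apply, intCast_bwHInt_zmod_two hm, mul_comm]
  rw [sum_intCast_bwA_mul ha r j fun n => if n < i ∧ bwHalfExp m i n = 0 then 1 else 0]
  simp only [← and_assoc, ite_and]

theorem flip_left_odd_iff_flip_right_odd {m b : ℕ} (hm : Odd m) (hb : b + 1 < m) {i j : ℕ} (hi : i < 2 ^ m)
    (hj : j < 2 ^ m) (c : Bool) :
    (i.testBit b = c ∧ bwPar m i = 0 ∧ j < i ^^^ 2 ^ b ∧ bwHalfExp m (i ^^^ 2 ^ b) j = 0) ↔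
      (j.testBit b = c ∧ bwPar m j = 0 ∧ j ^^^ 2 ^ b < i ∧
        bwHalfExp m i (j ^^^ 2 ^ b) = 0) := by
  have hpi := bwPar_xor_two_pow_add_bwPar (by omega : b < m) i
  have hpj := bwPar_xor_two_pow_add_bwPar (by omega : b < m) j
  have hflip : ∀ x < 2 ^ m, x ^^^ 2 ^ b < 2 ^ m := fun x hx =>
    Nat.xor_lt_two_pow hx (Nat.pow_lt_pow_right one_lt_two (by omega))
  rw [bwHalfExp_eq_zero_iff hm, bwHalfExp_eq_zero_iff hm, bitAgree_xor_two_pow_left]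
  by_cases hA : bitAgree m i (j ^^^ 2 ^ b) = 0
  · have hbit : j.testBit b = i.testBit b := by
      have := bitAgree_eq_zero_iff.1 hA b (by omega)
      rw [Nat.testBit_xor, Nat.testBit_two_pow_self] at this
      cases hib : i.testBit b <;> cases hjb : j.testBit b <;> simp_all
    have hlt : j < i ^^^ 2 ^ b ↔ j ^^^ 2 ^ b < i := by
      rw [lt_iff_testBit_of_bitAgree_eq_zero (by omega) (hflip i hi) hj
          (by rwa [bitAgree_xor_two_pow_left]),
        lt_iff_testBit_of_bitAgree_eq_zero (by omega) hi (hflip j hj) hA, Nat.testBit_xor,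
        Nat.testBit_two_pow_of_ne (by omega), Bool.xor_false]
    rw [hbit, hlt]
    constructor <;> rintro ⟨h1, h2, h3, h4⟩ <;> exact ⟨h1, by omega, h3, by omega⟩
  · constructor <;> rintro ⟨-, h2, -, h4⟩ <;> omega

theorem not_flip_top_odd_left {m : ℕ} (hm : Odd m) {i j : ℕ} (hi : i < 2 ^ m)
    (hj : j < 2 ^ m) :
    ¬ (i.testBit (m - 1) = true ∧ bwPar m i = 0 ∧ j < i ^^^ 2 ^ (m - 1) ∧
      bwHalfExp m (i ^^^ 2 ^ (m - 1)) j = 0) := by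
  rintro ⟨htop, hpi, hlt, hh⟩
  have hm0 := hm.pos
  have := bwPar_xor_two_pow_add_bwPar (by omega : m - 1 < m) i
  rw [bwHalfExp_eq_zero_iff hm] at hh
  rw [lt_iff_testBit_of_bitAgree_eq_zero hm0
      (Nat.xor_lt_two_pow hi (Nat.pow_lt_pow_right one_lt_two (by omega))) hj (by omega),
    Nat.testBit_xor, htop, Nat.testBit_two_pow_self] at hlt
  exact Bool.false_ne_true hlt

theorem not_flip_top_odd_right {m : ℕ} (hm : Odd m) {i j : ℕ} (hi : i < 2 ^ m)
    (hj : j < 2 ^ m) :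
    ¬ (j.testBit (m - 1) = false ∧ bwPar m j = 0 ∧ j ^^^ 2 ^ (m - 1) < i ∧
      bwHalfExp m i (j ^^^ 2 ^ (m - 1)) = 0) := by
  rintro ⟨htop, hpj, hlt, hh⟩
  have hm0 := hm.pos
  have := bwPar_xor_two_pow_add_bwPar (by omega : m - 1 < m) j
  rw [bwHalfExp_eq_zero_iff hm] at hh
  have hA : bitAgree m i (j ^^^ 2 ^ (m - 1)) = 0 := by omega
  have hdiff := bitAgree_eq_zero_iff.1 hA (m - 1) (by omega)
  rw [lt_iff_testBit_of_bitAgree_eq_zero hm0 hi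
    (Nat.xor_lt_two_pow hj (Nat.pow_lt_pow_right one_lt_two (by omega))) hA] at hlt
  rw [Nat.testBit_xor, htop, Nat.testBit_two_pow_self, hlt] at hdiff
  exact hdiff rfl

theorem bwA_map_mul_bwH_apply {m : ℕ} (hm : Odd m) (hm1 : 1 < m)
    (A : Matrix (Fin (2 ^ m)) (Fin (2 ^ m)) ℤ) (i j : Fin (2 ^ m)) :
    (A.map (Int.cast : ℤ → ℝ) * bwH m) i j = ((A * bwHInt m) i j : ℝ) := by
  rw [bwH_eq_map_bwHInt hm hm1]
  simpa using ((Int.castRingHom ℝ).map_matrix_mul A (bwHInt m) i j).symm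

theorem bwH_mul_bwA_map_transpose_apply {m : ℕ} (hm : Odd m) (hm1 : 1 < m)
    (A : Matrix (Fin (2 ^ m)) (Fin (2 ^ m)) ℤ) (i j : Fin (2 ^ m)) :
    (bwH m * (A.map (Int.cast : ℤ → ℝ))ᵀ) i j = ((bwHInt m * Aᵀ) i j : ℝ) := by
  rw [bwH_eq_map_bwHInt hm hm1, ← Matrix.transpose_map]
  simpa using ((Int.castRingHom ℝ).map_matrix_mul (bwHInt m) Aᵀ i j).symm

theorem exists_eq_two_mul_of_intCast_zmod_two_eq_zero {u : ℤ} (h : (u : ZMod 2) = 0) :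
    ∃ k : ℤ, (u : ℝ) = 2 * k := by
  obtain ⟨k, rfl⟩ := (ZMod.intCast_zmod_eq_zero_iff_dvd u 2).1 h
  exact ⟨k, by push_cast; ring⟩

theorem bwA_H_identities_mod_two_general (m : ℕ) (hm : 5 ≤ m) (hmo : Odd m)
    (i j : Fin (2 ^ m)) :
    (∀ a r : ℕ, 2 ≤ a → a ≤ m → (r = 1 ∨ r = 2) →
      ∃ k : ℤ, ((bwA m a r).map (Int.cast : ℤ → ℝ) * bwH m) i j -
        (bwH m * ((bwA m a r).map (Int.cast : ℤ → ℝ))ᵀ) i j = 2 * k) ∧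
    (∃ k : ℤ, ((bwA m 1 2).map (Int.cast : ℤ → ℝ) * bwH m) i j = 2 * k) ∧
    (∃ k : ℤ, (bwH m * ((bwA m 1 1).map (Int.cast : ℤ → ℝ))ᵀ) i j = 2 * k) := by
  have hm1 : 1 < m := by omega
  refine ⟨fun a r ha ham _ => ?_, ?_, ?_⟩
  · rw [bwA_map_mul_bwH_apply hmo hm1, bwH_mul_bwA_map_transpose_apply hmo hm1, ← Int.cast_sub]
    apply exists_eq_two_mul_of_intCast_zmod_two_eq_zero
    rw [Int.cast_sub, sub_eq_zero, intCast_bwA_mul_bwHInt_apply hm (by omega),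
      intCast_bwHInt_mul_bwA_transpose_apply hm (by omega)]
    exact if_congr (flip_left_odd_iff_flip_right_odd hmo (by omega) i.isLt j.isLt _) rfl rfl
  · rw [bwA_map_mul_bwH_apply hmo hm1]
    apply exists_eq_two_mul_of_intCast_zmod_two_eq_zero
    rw [intCast_bwA_mul_bwHInt_apply hm (by omega), if_neg]
    simpa using not_flip_top_odd_left hmo i.isLt j.isLt
  · rw [bwH_mul_bwA_map_transpose_apply hmo hm1]
    apply exists_eq_two_mul_of_intCast_zmod_two_eq_zero
    rw [intCast_bwHInt_mul_bwA_transpose_apply hm (by omega), if_neg]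
    simpa using not_flip_top_odd_right hmo i.isLt j.isLt

/-- For `m ≥ 5` odd and `i > j`, modulo 2: `(A_{ar} H)_{ij} ≡ (H A_{ar}ᵀ)_{ij}` for
`a = 2, …, m`; `(A_{12} H)_{ij} ≡ 0`; and `(H A_{11}ᵀ)_{ij} ≡ 0`. -/
theorem bwA_H_identities_mod_two (m : ℕ) (hm : 5 ≤ m) (hmo : Odd m)
    (i j : Fin (2 ^ m)) (hij : j < i) :
    (∀ a r : ℕ, 2 ≤ a → a ≤ m → (r = 1 ∨ r = 2) →
      ∃ k : ℤ, ((bwA m a r).map (Int.cast : ℤ → ℝ) * bwH m) i j -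
        (bwH m * ((bwA m a r).map (Int.cast : ℤ → ℝ))ᵀ) i j = 2 * k) ∧
    (∃ k : ℤ, ((bwA m 1 2).map (Int.cast : ℤ → ℝ) * bwH m) i j = 2 * k) ∧
    (∃ k : ℤ, (bwH m * ((bwA m 1 1).map (Int.cast : ℤ → ℝ))ᵀ) i j = 2 * k) :=
  bwA_H_identities_mod_two_general m hm hmo i j
end

section
/- Let m ≥ 5 be odd, r ∈ {1,2}, and a ∈ {2,3,…,m}. Then u_{Σ_{ar}}(α) = 1 for all α ∈ ℤ^{2^m}. -/
open Matrix

/-!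
Write `b = m - a` and let `i'` be `i` with its binary digit `b` flipped. The row of `Σ_{ar}` at
`i` is either `ε_i` or `-ε_i + 2^{p(i)} ε_{i'}`, and the Gram matrix satisfies
`2^{p(i)} G_{i'j} = G_{ij}` or `2 G_{ij}` according as `i` and `j` agree in digit `b` or not.
So `(H - Σ H Σᵀ)_{ij}` is `G_{ij}` times an integer determined by the relative order of
`i, j, i', j'`. The exponent of `√2` in `G_{ij}` is `p(i) + p(j) + 2m - 2⌈m/2⌉ - d(i,j)`, with `d`
the Hamming distance; it is even and nonnegative, so `G_{ij}` is a power of `2`. The integer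
factor is odd only when `j = i'` or when `i` and `j` agree in all digits from `b` on; then the
exponent is positive (using `d(i,j) ≤ b ≤ m - 2` in the second case), so `G_{ij}` is even and
`B_Σ(α, α)` is an even integer.
-/

lemma bwBit_le_one (i l : ℕ) : bwBit i l ≤ 1 :=
  Nat.le_of_lt_succ (Nat.mod_lt _ two_pos)

lemma bwBit_add (i b l : ℕ) : bwBit i (b + l) = bwBit (i / 2 ^ b) l := by
  simp only [bwBit, Nat.div_div_eq_div_mul, pow_add]

lemma bwBit_add_two_pow {i b : ℕ} (h : bwBit i b = 0) (l : ℕ) :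
    bwBit (i + 2 ^ b) l = if l = b then 1 else bwBit i l := by
  rcases lt_or_ge l b with hl | hl
  · obtain ⟨k, rfl⟩ := Nat.exists_eq_add_of_lt hl
    rw [if_neg (by omega), bwBit, bwBit, pow_add, pow_add, mul_assoc,
      Nat.add_mul_div_left _ _ (by positivity), pow_one, Nat.add_mul_mod_self_right]
  · obtain ⟨k, rfl⟩ := Nat.exists_eq_add_of_le hl
    have hu : i / 2 ^ b % 2 = 0 := h
    rw [bwBit_add, bwBit_add, Nat.add_div_right _ (by positivity)]
    rcases k with _ | k
    · simp only [bwBit, pow_zero, Nat.div_one, add_zero, if_true]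
      omega
    · rw [if_neg (by omega), add_comm k 1, bwBit_add, bwBit_add, pow_one]
      congr 1
      omega

lemma two_pow_le_of_bwBit_eq_one {i b : ℕ} (h : bwBit i b = 1) : 2 ^ b ≤ i := by
  by_contra hlt
  rw [bwBit, Nat.div_eq_of_lt (by omega)] at h
  exact absurd h (by norm_num)

lemma bwBit_sub_two_pow {i b : ℕ} (h : bwBit i b = 1) : bwBit (i - 2 ^ b) b = 0 := by
  have hle := two_pow_le_of_bwBit_eq_one h
  have hdiv := Nat.sub_mul_div i (2 ^ b) 1
  have hpos : 1 ≤ i / 2 ^ b := (Nat.one_le_div_iff (by positivity)).2 hle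
  rw [mul_one] at hdiv
  unfold bwBit at h ⊢
  rw [hdiv]
  omega

lemma add_two_pow_lt_two_pow {m b i : ℕ} (hb : b < m) (hi : i < 2 ^ m) (h : bwBit i b = 0) :
    i + 2 ^ b < 2 ^ m := by
  have hpow : 2 ^ m = 2 ^ (m - b) * 2 ^ b := by rw [← pow_add, Nat.sub_add_cancel hb.le]
  have hq : i / 2 ^ b < 2 ^ (m - b) := Nat.div_lt_of_lt_mul (by rwa [mul_comm, ← hpow])
  have heven : 2 ∣ 2 ^ (m - b) := dvd_pow_self 2 (by omega)
  have hbit : i / 2 ^ b % 2 = 0 := h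
  rw [hpow, ← Nat.div_lt_iff_lt_mul (by positivity), Nat.add_div_right _ (by positivity)]
  omega

def bwDist (m i j : ℕ) : ℕ := ((Finset.range m).filter fun l => bwBit i l ≠ bwBit j l).card

lemma bwDist_le (m i j : ℕ) : bwDist m i j ≤ m :=
  (Finset.card_filter_le _ _).trans (Finset.card_range m).le

lemma bwDist_le_of_le_add_two_pow {m b i j : ℕ} (hji : j < i) (hij : i ≤ j + 2 ^ b)
    (hbit : bwBit i b = bwBit j b) : bwDist m i j ≤ b := by
  have hdiv : i / 2 ^ b = j / 2 ^ b := by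
    have h1 : j / 2 ^ b ≤ i / 2 ^ b := Nat.div_le_div_right hji.le
    have h2 : i / 2 ^ b ≤ j / 2 ^ b + 1 := by
      rw [← Nat.add_div_right _ (by positivity)]
      exact Nat.div_le_div_right hij
    unfold bwBit at hbit
    omega
  refine (Finset.card_le_card fun l hl => ?_).trans (Finset.card_range b).le
  simp only [Finset.mem_filter, Finset.mem_range] at hl ⊢
  by_contra hlb
  obtain ⟨k, rfl⟩ := Nat.exists_eq_add_of_le (not_lt.1 hlb)
  exact hl.2 (by rw [bwBit_add, bwBit_add, hdiv])

lemma sum_range_eq_add_of_eq_off {m b : ℕ} (hb : b < m) {f g : ℕ → ℤ}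
    (h : ∀ l, l ≠ b → f l = g l) :
    ∑ l ∈ Finset.range m, f l = ∑ l ∈ Finset.range m, g l + (f b - g b) := by
  have hmem := Finset.mem_range.2 hb
  rw [← Finset.sum_erase_add _ _ hmem, ← Finset.sum_erase_add _ _ hmem,
    Finset.sum_congr rfl fun l hl => h l (Finset.ne_of_mem_erase hl)]
  ring

lemma bwPar_add_two_pow {m i b : ℕ} (hb : b < m) (h : bwBit i b = 0) :
    bwPar m (i + 2 ^ b) + bwPar m i = 1 := by
  have hcard := sum_range_eq_add_of_eq_off hb
    (f := fun l => if bwBit (i + 2 ^ b) l = 0 then 1 else 0)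
    (g := fun l => if bwBit i l = 0 then 1 else 0) fun l hl => by
      simp only [bwBit_add_two_pow h, if_neg hl]
  simp only [bwBit_add_two_pow h b, h, if_true, one_ne_zero, if_false] at hcard
  rw [← Finset.natCast_card_filter, ← Finset.natCast_card_filter] at hcard
  unfold bwPar
  omega

lemma bwDist_add_two_pow {m i b : ℕ} (hb : b < m) (h : bwBit i b = 0) (j : ℕ) :
    (bwDist m (i + 2 ^ b) j : ℤ) = bwDist m i j + 1 - 2 * bwBit j b := by
  have hsum := sum_range_eq_add_of_eq_off hb
    (f := fun l => if bwBit (i + 2 ^ b) l ≠ bwBit j l then 1 else 0)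
    (g := fun l => if bwBit i l ≠ bwBit j l then 1 else 0) fun l hl => by
      simp only [bwBit_add_two_pow h, if_neg hl]
  simp only [bwBit_add_two_pow h b, h, if_true] at hsum
  rw [bwDist, bwDist, Finset.natCast_card_filter, Finset.natCast_card_filter, hsum]
  have := bwBit_le_one j b
  interval_cases bwBit j b
  · simp
  · simp only [ne_eq, not_true_eq_false, if_false, zero_ne_one, not_false_eq_true, if_true]
    push_cast
    ring

lemma bwExp_eq_bwDist (m i j : ℕ) :
    bwExp m i j = bwPar m i + bwPar m j + 2 * m - 2 * ((m + 1) / 2 : ℕ) - bwDist m i j := by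
  have hterm : ∀ l ∈ Finset.range m,
      (2 * (bwBit i l : ℤ) * bwBit j l - bwBit i l - bwBit j l + 2) =
        2 - if bwBit i l ≠ bwBit j l then 1 else 0 := by
    intro l _
    have := bwBit_le_one i l
    have := bwBit_le_one j l
    interval_cases bwBit i l <;> interval_cases bwBit j l <;> rfl
  rw [bwExp, Finset.sum_congr rfl hterm, Finset.sum_sub_distrib, bwDist,
    Finset.natCast_card_filter]
  simp only [Finset.sum_const, Finset.card_range, nsmul_eq_mul]
  ring

lemma bwExp_comm (m i j : ℕ) : bwExp m i j = bwExp m j i := by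
  rw [bwExp_eq_bwDist, bwExp_eq_bwDist, bwDist, bwDist]
  simp only [ne_comm]
  ring

lemma bwExp_self (m i : ℕ) :
    bwExp m i i = 2 * bwPar m i + 2 * m - 2 * ((m + 1) / 2 : ℕ) := by
  rw [bwExp_eq_bwDist, bwDist]
  simp only [ne_eq, not_true_eq_false, Finset.filter_false, Finset.card_empty]
  ring

lemma bwExp_add_two_pow {m i b : ℕ} (hb : b < m) (h : bwBit i b = 0) (j : ℕ) :
    bwExp m (i + 2 ^ b) j + 2 * bwPar m i = bwExp m i j + 2 * bwBit j b := by
  have hp := bwPar_add_two_pow hb h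
  rw [bwExp_eq_bwDist, bwExp_eq_bwDist, bwDist_add_two_pow hb h]
  omega

lemma even_bwPar_add_bwPar_add_bwDist (m i j : ℕ) :
    Even (bwPar m i + bwPar m j + bwDist m i j) := by
  have hsum : 2 ∣ ((Finset.range m).filter fun l => bwBit i l = 0).card +
      ((Finset.range m).filter fun l => bwBit j l = 0).card + bwDist m i j := by
    rw [bwDist, Finset.card_filter, Finset.card_filter, Finset.card_filter,
      ← Finset.sum_add_distrib, ← Finset.sum_add_distrib]
    refine Finset.dvd_sum fun l _ => ?_
    have := bwBit_le_one i l
    have := bwBit_le_one j l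
    interval_cases bwBit i l <;> interval_cases bwBit j l <;> decide
  rw [Nat.even_iff, bwPar, bwPar]
  omega

lemma even_bwExp (m i j : ℕ) : Even (bwExp m i j) := by
  obtain ⟨k, hk⟩ := even_bwPar_add_bwPar_add_bwDist m i j
  refine ⟨k + m - ((m + 1) / 2 : ℕ) - bwDist m i j, ?_⟩
  have hk' : ((bwPar m i + bwPar m j + bwDist m i j : ℕ) : ℤ) = (k + k : ℕ) := by rw [hk]
  push_cast at hk'
  rw [bwExp_eq_bwDist]
  linarith

lemma bwExp_nonneg (m i j : ℕ) : 0 ≤ bwExp m i j := by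
  obtain ⟨k, hk⟩ := even_bwExp m i j
  have := bwExp_eq_bwDist m i j
  have := bwDist_le m i j
  omega

lemma bwExp_pos_of_bwDist_add_two_le {m i j : ℕ} (h : bwDist m i j + 2 ≤ m) :
    0 < bwExp m i j := by
  have := bwExp_eq_bwDist m i j
  omega

def bwPartner {m b : ℕ} (hb : b < m) (i : Fin (2 ^ m)) : Fin (2 ^ m) :=
  if h : bwBit i b = 0 then ⟨i + 2 ^ b, add_two_pow_lt_two_pow hb i.2 h⟩
  else ⟨i - 2 ^ b, (Nat.sub_le _ _).trans_lt i.2⟩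

section Partner

variable {m b : ℕ} {hb : b < m}

lemma bwPartner_val_of_bwBit_eq_zero {i : Fin (2 ^ m)} (h : bwBit i b = 0) :
    (bwPartner hb i : ℕ) = i + 2 ^ b := by
  simp [bwPartner, h]

lemma bwPartner_val_of_bwBit_eq_one {i : Fin (2 ^ m)} (h : bwBit i b = 1) :
    (bwPartner hb i : ℕ) + 2 ^ b = i ∧ bwBit (bwPartner hb i) b = 0 := by
  have hle := two_pow_le_of_bwBit_eq_one h
  simp only [bwPartner, h, one_ne_zero, dite_false]
  exact ⟨by omega, bwBit_sub_two_pow h⟩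

lemma bwBit_bwPartner (i : Fin (2 ^ m)) (l : ℕ) :
    bwBit (bwPartner hb i) l = if l = b then 1 - bwBit i b else bwBit i l := by
  rcases Nat.le_one_iff_eq_zero_or_eq_one.1 (bwBit_le_one i b) with h | h
  · rw [bwPartner_val_of_bwBit_eq_zero h, bwBit_add_two_pow h, h]
  · obtain ⟨hval, hk⟩ := bwPartner_val_of_bwBit_eq_one (hb := hb) h
    have hbits := bwBit_add_two_pow hk l
    rw [hval] at hbits
    split_ifs at hbits ⊢ with hl
    · rw [hl, hk, h]
    · exact hbits.symm

lemma bwPartner_ne_of_bwBit_eq {i j : Fin (2 ^ m)} (hbit : bwBit i b = bwBit j b) :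
    bwPartner hb i ≠ j := by
  intro h
  have := bwBit_bwPartner (hb := hb) i b
  rw [h, if_pos rfl, hbit] at this
  have := bwBit_le_one j b
  omega

lemma bwExp_bwPartner (i : Fin (2 ^ m)) (j : ℕ) :
    bwExp m (bwPartner hb i) j + 2 * bwPar m i =
      bwExp m i j + 2 * (if bwBit i b = bwBit j b then 0 else 1) := by
  have hj := bwBit_le_one j b
  rcases Nat.le_one_iff_eq_zero_or_eq_one.1 (bwBit_le_one i b) with h | h
  · rw [bwPartner_val_of_bwBit_eq_zero h, bwExp_add_two_pow hb h, h]
    split_ifs <;> omega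
  · obtain ⟨hval, hk⟩ := bwPartner_val_of_bwBit_eq_one (hb := hb) h
    have hE := bwExp_add_two_pow hb hk j
    have hp := bwPar_add_two_pow hb hk
    rw [hval] at hE hp
    rw [h]
    split_ifs <;> omega

lemma bwExp_bwPartner_pos (hm : 2 ≤ m) (i : Fin (2 ^ m)) : 0 < bwExp m (bwPartner hb i) i := by
  have := bwExp_bwPartner (hb := hb) i i
  rw [if_pos rfl, bwExp_self] at this
  omega

end Partner

lemma bwGram_apply (m : ℕ) (i j : Fin (2 ^ m)) : bwGram m i j = √2 ^ bwExp m i j := rfl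

lemma bwGram_comm (m : ℕ) (i j : Fin (2 ^ m)) : bwGram m i j = bwGram m j i := by
  rw [bwGram_apply, bwGram_apply, bwExp_comm]

lemma two_pow_mul_sqrt_two_zpow (k : ℕ) (e : ℤ) : 2 ^ k * √2 ^ e = √2 ^ (e + 2 * k) := by
  rw [zpow_add₀ (by positivity), mul_comm, show (2 * k : ℤ) = ((2 * k : ℕ) : ℤ) by push_cast; rfl,
    zpow_natCast, pow_mul, Real.sq_sqrt zero_le_two]

lemma bwGram_bwPartner {m b : ℕ} (hb : b < m) (i y : Fin (2 ^ m)) :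
    2 ^ bwPar m i * bwGram m (bwPartner hb i) y =
      (if bwBit i b = bwBit y b then 1 else 2) * bwGram m i y := by
  rw [bwGram_apply, bwGram_apply, two_pow_mul_sqrt_two_zpow, bwExp_bwPartner]
  split_ifs
  · simp
  · simpa using (two_pow_mul_sqrt_two_zpow 1 (bwExp m i y)).symm

lemma bwGram_eq_two_pow (m : ℕ) (i j : Fin (2 ^ m)) :
    bwGram m i j = 2 ^ (bwExp m i j / 2).toNat := by
  obtain ⟨k, hk⟩ := even_bwExp m i j
  have := bwExp_nonneg m i j
  have h := two_pow_mul_sqrt_two_zpow (bwExp m i j / 2).toNat 0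
  rw [zpow_zero, mul_one, zero_add, show 2 * ((bwExp m i j / 2).toNat : ℤ) = bwExp m i j by omega]
    at h
  rw [bwGram_apply, h]

lemma bwGram_mul_intCast_mem_zmultiples {m : ℕ} {i j : Fin (2 ^ m)} {n : ℤ}
    (h : Even n ∨ 0 < bwExp m i j) : bwGram m i j * n ∈ AddSubgroup.zmultiples (2 : ℝ) := by
  rw [AddSubgroup.mem_zmultiples_iff, bwGram_eq_two_pow]
  rcases h with ⟨k, rfl⟩ | hpos
  · exact ⟨2 ^ (bwExp m i j / 2).toNat * k, by push_cast; ring⟩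
  · obtain ⟨k, hk⟩ := even_bwExp m i j
    obtain ⟨e, he⟩ : ∃ e, (bwExp m i j / 2).toNat = e + 1 := ⟨(bwExp m i j / 2).toNat - 1, by omega⟩
    exact ⟨2 ^ e * n, by rw [he]; ring⟩

noncomputable def halfStep {n : ℕ} (i j : Fin n) : ℝ :=
  if j < i then 1 else if i = j then 1 / 2 else 0

lemma halfStep_of_lt {n : ℕ} {i j : Fin n} (h : j < i) : halfStep i j = 1 := if_pos h

lemma halfStep_of_ne {n : ℕ} {i j : Fin n} (h : i ≠ j) :
    halfStep i j = if j < i then 1 else 0 := by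
  simp [halfStep, h]

lemma bwH_eq_bwGram_mul_halfStep (m : ℕ) (i j : Fin (2 ^ m)) :
    bwH m i j = bwGram m i j * halfStep i j := by
  have hdiag : √2 ^ (bwExp m i i - 2) = √2 ^ bwExp m i i * (1 / 2) := by
    rw [zpow_sub₀ (by positivity), zpow_two, Real.mul_self_sqrt zero_le_two]
    ring
  simp only [bwH, halfStep, Matrix.of_apply, bwGram_apply]
  split_ifs <;> simp_all

section Reflection

variable {m b : ℕ} (hb : b < m)

noncomputable def bwReflect (β : ℕ) (c : ℝ) (i : Fin (2 ^ m)) (f : Fin (2 ^ m) → ℝ) : ℝ :=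
  if bwBit i b = β then -f i + c * f (bwPartner hb i) else f i

lemma bwReflect_bwGram_mul (β : ℕ) (i y : Fin (2 ^ m)) (g : Fin (2 ^ m) → ℝ) :
    bwReflect hb β (2 ^ bwPar m i) i (fun k => bwGram m k y * g k) =
      bwGram m i y * bwReflect hb β (if bwBit i b = bwBit y b then 1 else 2) i g := by
  by_cases h : bwBit i b = β
  · simp only [bwReflect]
    rw [if_pos h, if_pos h, ← mul_assoc, bwGram_bwPartner]
    ring
  · simp only [bwReflect, h, if_false]

noncomputable def bwCoeff (β : ℕ) (i j : Fin (2 ^ m)) : ℝ :=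
  halfStep i j - bwReflect hb β (if bwBit j b = bwBit i b then 1 else 2) j
    (fun k => bwReflect hb β (if bwBit i b = bwBit k b then 1 else 2) i (fun l => halfStep l k))

end Reflection

section Sigma

variable {m a r : ℕ} (hb : m - a < m)

lemma bwSigma_apply (hr : r = 1 ∨ r = 2) (i k : Fin (2 ^ m)) :
    bwSigma m a r i k =
      if bwBit i (m - a) = r - 1 then
        (if k = i then -1 else 0) + (if k = bwPartner hb i then 2 ^ bwPar m i else 0)
      else if k = i then 1 else 0 := by
  have hbit := bwBit_le_one i (m - a)
  rcases hr with rfl | rfl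
  · by_cases h : bwBit i (m - a) = 0
    · have : (k : ℕ) = i + 2 ^ (m - a) ↔ k = bwPartner hb i := by
        rw [Fin.ext_iff, bwPartner_val_of_bwBit_eq_zero h]
      simp [bwSigma, h, this]
    · simp [bwSigma, h]
  · by_cases h : bwBit i (m - a) = 1
    · obtain ⟨hval, -⟩ := bwPartner_val_of_bwBit_eq_one (hb := hb) h
      have : (k : ℕ) + 2 ^ (m - a) = i ↔ k = bwPartner hb i := by
        rw [Fin.ext_iff]
        omega
      simp [bwSigma, h, this]
    · simp [bwSigma, h]

lemma sum_bwSigma_mul (hr : r = 1 ∨ r = 2) (i : Fin (2 ^ m)) (f : Fin (2 ^ m) → ℝ) :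
    ∑ k, (bwSigma m a r i k : ℝ) * f k = bwReflect hb (r - 1) (2 ^ bwPar m i) i f := by
  simp only [bwSigma_apply hb hr, bwReflect]
  split_ifs <;> simp [add_mul, Finset.sum_add_distrib, ite_mul]

lemma bwBMat_bwSigma_apply (hr : r = 1 ∨ r = 2) (i j : Fin (2 ^ m)) :
    bwBMat m (bwSigma m a r) i j = bwH m i j -
      bwReflect hb (r - 1) (2 ^ bwPar m j) j
        (fun k => bwReflect hb (r - 1) (2 ^ bwPar m i) i (fun l => bwH m l k)) := by
  simp only [bwBMat, Matrix.sub_apply, Matrix.mul_apply, Matrix.transpose_apply,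
    Matrix.map_apply]
  rw [← sum_bwSigma_mul hb hr]
  congr 1
  refine Finset.sum_congr rfl fun k _ => ?_
  rw [← sum_bwSigma_mul hb hr, mul_comm]

lemma bwBMat_bwSigma_eq_bwGram_mul_bwCoeff (hr : r = 1 ∨ r = 2) (i j : Fin (2 ^ m)) :
    bwBMat m (bwSigma m a r) i j = bwGram m i j * bwCoeff hb (r - 1) i j := by
  have hinner : ∀ k, bwReflect hb (r - 1) (2 ^ bwPar m i) i (fun l => bwH m l k) =
      bwGram m k i * bwReflect hb (r - 1) (if bwBit i (m - a) = bwBit k (m - a) then 1 else 2) i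
        (fun l => halfStep l k) := by
    intro k
    simp only [bwH_eq_bwGram_mul_halfStep]
    rw [bwReflect_bwGram_mul, bwGram_comm]
  rw [bwBMat_bwSigma_apply hb hr, bwH_eq_bwGram_mul_halfStep m i j]
  simp only [hinner]
  rw [bwReflect_bwGram_mul, bwGram_comm m j i, bwCoeff, mul_sub]

end Sigma

lemma exists_two_sub_two_mul_halfStep_eq_intCast {n : ℕ} (x y : Fin n) {P : Prop}
    (h : x = y → P) : ∃ k : ℤ, 2 - 2 * halfStep x y = k ∧ (Even k ∨ P) := by
  by_cases hxy : x = y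
  · exact ⟨1, by rw [hxy, halfStep, if_neg (lt_irrefl y), if_pos rfl]; norm_num, Or.inr (h hxy)⟩
  · rw [halfStep_of_ne hxy]
    split_ifs
    · exact ⟨0, by norm_num, Or.inl .zero⟩
    · exact ⟨2, by norm_num, Or.inl even_two⟩

section Coefficient

variable {m b : ℕ} (hb : b < m) {i j : Fin (2 ^ m)}

lemma exists_halfStep_bwPartner_eq_intCast (hm : b + 2 ≤ m) (hji : j < i)
    (hbit : bwBit i b = bwBit j b) :
    ∃ n : ℤ, halfStep (bwPartner hb i) j + halfStep i (bwPartner hb j) -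
      2 * halfStep (bwPartner hb i) (bwPartner hb j) = n ∧ (Even n ∨ 0 < bwExp m i j) := by
  have hji' : (j : ℕ) < i := hji
  have hpow : 0 < 2 ^ b := by positivity
  have hval : ((bwPartner hb i : ℕ) = i + 2 ^ b ∧ (bwPartner hb j : ℕ) = j + 2 ^ b) ∨
      ((bwPartner hb i : ℕ) + 2 ^ b = i ∧ (bwPartner hb j : ℕ) + 2 ^ b = j) := by
    rcases Nat.le_one_iff_eq_zero_or_eq_one.1 (bwBit_le_one i b) with h | h
    · exact Or.inl ⟨bwPartner_val_of_bwBit_eq_zero h, bwPartner_val_of_bwBit_eq_zero (hbit ▸ h)⟩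
    · exact Or.inr ⟨(bwPartner_val_of_bwBit_eq_one h).1,
        (bwPartner_val_of_bwBit_eq_one (hbit ▸ h)).1⟩
  have hpp : bwPartner hb j < bwPartner hb i := by
    rw [Fin.lt_def]
    omega
  -- Otherwise `j < i ≤ j + 2 ^ b`, so `i` and `j` agree in all digits from `b` on.
  have hclose : ¬ (j < bwPartner hb i ∧ bwPartner hb j < i) → 0 < bwExp m i j := by
    rw [Fin.lt_def, Fin.lt_def]
    intro h
    have := bwDist_le_of_le_add_two_pow (m := m) hji' (by omega) hbit
    exact bwExp_pos_of_bwDist_add_two_le (by omega)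
  rw [halfStep_of_lt hpp, halfStep_of_ne (bwPartner_ne_of_bwBit_eq hbit),
    halfStep_of_ne (bwPartner_ne_of_bwBit_eq hbit.symm).symm]
  split_ifs with h1 h2 h2
  · exact ⟨0, by norm_num, Or.inl .zero⟩
  · exact ⟨-1, by norm_num, Or.inr (hclose fun h => h2 h.2)⟩
  · exact ⟨-1, by norm_num, Or.inr (hclose fun h => h1 h.1)⟩
  · exact ⟨-2, by norm_num, Or.inr (hclose fun h => h1 h.1)⟩

lemma exists_bwCoeff_eq_intCast (hm : b + 2 ≤ m) (hji : j < i) (β : ℕ) :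
    ∃ n : ℤ, bwCoeff hb β i j = n ∧ (Even n ∨ 0 < bwExp m i j) := by
  have hpartner_pos : ∀ x : Fin (2 ^ m), 0 < bwExp m (bwPartner hb x) x :=
    bwExp_bwPartner_pos (by omega)
  have hbit_partner : ∀ x : Fin (2 ^ m), bwBit (bwPartner hb x) b = 1 - bwBit x b := fun x => by
    rw [bwBit_bwPartner, if_pos rfl]
  have hi1 := bwBit_le_one i b
  have hj1 := bwBit_le_one j b
  simp only [bwCoeff, bwReflect, halfStep_of_lt hji]
  by_cases hi : bwBit i b = β <;> by_cases hj : bwBit j b = β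
  · obtain ⟨n, hn, h⟩ := exists_halfStep_bwPartner_eq_intCast hb hm hji (hi.trans hj.symm)
    refine ⟨n, ?_, h⟩
    rw [← hn, if_pos hj, if_pos hi, if_pos hi, if_pos (hj.trans hi.symm),
      if_pos (hi.trans hj.symm), if_neg (by rw [hbit_partner]; omega)]
    ring
  · obtain ⟨n, hn, h⟩ := exists_two_sub_two_mul_halfStep_eq_intCast (bwPartner hb i) j
      (P := 0 < bwExp m i j) fun h => by rw [← h, bwExp_comm]; exact hpartner_pos i
    refine ⟨n, ?_, h⟩
    rw [← hn, if_neg hj, if_pos hi, if_neg (by omega)]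
    ring
  · obtain ⟨n, hn, h⟩ := exists_two_sub_two_mul_halfStep_eq_intCast i (bwPartner hb j)
      (P := 0 < bwExp m i j) fun h => by rw [h]; exact hpartner_pos j
    refine ⟨n, ?_, h⟩
    rw [← hn, if_pos hj, if_neg hi, if_neg hi, if_neg (by omega)]
    ring
  · refine ⟨0, ?_, Or.inl .zero⟩
    rw [if_neg hj, if_neg hi]
    simp

end Coefficient

lemma bwBMat_bwSigma_mem_zmultiples {m a r : ℕ} (ha : 2 ≤ a) (ha' : a ≤ m) (hr : r = 1 ∨ r = 2)
    {i j : Fin (2 ^ m)} (hji : j < i) :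
    bwBMat m (bwSigma m a r) i j ∈ AddSubgroup.zmultiples (2 : ℝ) := by
  have hb : m - a < m := by omega
  obtain ⟨n, hn, h⟩ := exists_bwCoeff_eq_intCast hb (by omega) hji (r - 1)
  rw [bwBMat_bwSigma_eq_bwGram_mul_bwCoeff hb hr, hn]
  exact bwGram_mul_intCast_mem_zmultiples h

lemma bwU_eq_one_of_forall_mem_zmultiples {m : ℕ} {S : Matrix (Fin (2 ^ m)) (Fin (2 ^ m)) ℤ}
    (hS : ∀ i j, j < i → bwBMat m S i j ∈ AddSubgroup.zmultiples (2 : ℝ))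
    (α : Fin (2 ^ m) → ℤ) : bwU m S α = 1 := by
  have hB : bwBQuad m S α α ∈ AddSubgroup.zmultiples (2 : ℝ) :=
    AddSubgroup.sum_mem _ fun i _ => AddSubgroup.sum_mem _ fun j _ => by
      split_ifs with h
      · rw [← Int.cast_mul, ← zsmul_eq_mul]
        exact zsmul_mem (hS i j h) _
      · exact zero_mem _
  obtain ⟨k, hk⟩ := AddSubgroup.mem_zmultiples_iff.1 hB
  rw [bwU, Real.cos_eq_one_iff, ← hk, zsmul_eq_mul]
  exact ⟨k, by ring⟩

theorem bwU_trivial_odd_case_general (m : ℕ) (a r : ℕ)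
    (ha : 2 ≤ a) (ha' : a ≤ m) (hr : r = 1 ∨ r = 2) (α : Fin (2 ^ m) → ℤ) :
    bwU m (bwSigma m a r) α = 1 :=
  bwU_eq_one_of_forall_mem_zmultiples (fun _ _ => bwBMat_bwSigma_mem_zmultiples ha ha' hr) α

/-- For `m ≥ 5` odd, `r ∈ {1,2}` and `a ∈ {2, …, m}`, `u_{Σ_{ar}}(α) = 1` for all `α`. -/
theorem bwU_trivial_odd_case (m : ℕ) (hm : 5 ≤ m) (hmo : Odd m) (a r : ℕ)
    (ha : 2 ≤ a) (ha' : a ≤ m) (hr : r = 1 ∨ r = 2) (α : Fin (2 ^ m) → ℤ) :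
    bwU m (bwSigma m a r) α = 1 :=
  bwU_trivial_odd_case_general m a r ha ha' hr α
end

section
/- Write σ₃ = σ₁σ₂. There exist orthogonal matrices U₁,…,U₆ ∈ O(4,ℝ), each normalizing the subgroup E(2) of O(4,ℝ), such that: U₁⁻¹(σ₃⊗σ₃)U₁ = σ₂⊗σ₁; U₂⁻¹(σ₁⊗σ₁)U₂ = 1₂⊗σ₁; U₃⁻¹(σ₂⊗σ₁)U₃ = 1₂⊗σ₁; U₄⁻¹(σ₂⊗σ₂)U₄ = σ₂⊗1₂; U₅⁻¹(σ₁⊗1₂)U₅ = σ₂⊗1₂ and U₅⁻¹(σ₁⊗σ₁)U₅ = σ₂⊗σ₂; U₆⁻¹(σ₃⊗σ₂)U₆ = σ₃⊗1₂. -/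
open Matrix

/-- The type of `2^m × 2^m` real matrices, with rows and columns indexed by `𝔽₂^m`. -/
abbrev EMat (m : ℕ) := Matrix (Fin m → Fin 2) (Fin m → Fin 2) ℝ

/-- `pauliR 0 = 1₂`, `pauliR 1 = σ₁`, `pauliR 2 = σ₂`, `pauliR 3 = σ₃ = σ₁ σ₂`. -/
noncomputable def pauliR : Fin 4 → Matrix (Fin 2) (Fin 2) ℝ :=
  ![1, !![0, 1; 1, 0], !![1, 0; 0, -1], !![0, 1; 1, 0] * !![1, 0; 0, -1]]

/-- The Kronecker (tensor) product of `m` matrices of size `2 × 2`. -/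
noncomputable def kprod (m : ℕ) (f : Fin m → Matrix (Fin 2) (Fin 2) ℝ) : EMat m :=
  Matrix.of fun i j => ∏ a, f a (i a) (j a)

/-- The extraspecial group `E(m) = 2_+^{2m+1}`, realized as the set of matrices
`± σ_{i₁} ⊗ ⋯ ⊗ σ_{iₘ}` with each factor in `{1₂, σ₁, σ₂, σ₁σ₂}`. -/
noncomputable def Esp (m : ℕ) : Finset (EMat m) :=
  @Finset.image _ _ (Classical.decEq _)
    (fun p : Bool × (Fin m → Fin 4) =>
      (if p.1 then (-1 : EMat m) else 1) * kprod m fun b => pauliR (p.2 b))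
    Finset.univ

/-- `k2 x y = σ_x ⊗ σ_y` as a `4 × 4` real matrix. -/
noncomputable def k2 (x y : Fin 4) : EMat 2 := kprod 2 fun b => pauliR (![x, y] b)

/-- `U` is orthogonal and lies in the normalizer of `E(2)` in `O(4, ℝ)`. -/
def inNormE2 (U : EMat 2) : Prop :=
  U * Uᵀ = 1 ∧ Uᵀ * U = 1 ∧ ∀ h : EMat 2, h ∈ Esp 2 ↔ U * h * Uᵀ ∈ Esp 2

/-!
The conjugating matrices are the Clifford gates CNOT (for `U₁, U₂, U₄, U₆`), CZ (for `U₃`) and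
`H ⊗ H` (for `U₅`). They have rational entries, so every identity about them is an exact
computation over `ℚ`, transported to `ℝ` along the cast. For the normalizer condition it suffices
to conjugate generators: `E(2)` is generated as a monoid by `-1` and the four `Σ_{ar}`,
conjugation by an orthogonal matrix is multiplicative, and an injective self-map of the finite set
`E(2)` is onto, which gives the converse inclusion.
-/

abbrev EMatQ := Matrix (Fin 2 → Fin 2) (Fin 2 → Fin 2) ℚ

noncomputable abbrev toReal : EMatQ →+* EMat 2 := (Rat.castHom ℝ).mapMatrix

def pauliQ : Fin 4 → Matrix (Fin 2) (Fin 2) ℚ :=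
  ![1, !![0, 1; 1, 0], !![1, 0; 0, -1], !![0, 1; 1, 0] * !![1, 0; 0, -1]]

def k2Q (x y : Fin 4) : EMatQ := of fun i j => pauliQ x (i 0) (j 0) * pauliQ y (i 1) (j 1)

theorem map_pauliQ (x : Fin 4) : (Rat.castHom ℝ).mapMatrix (pauliQ x) = pauliR x := by
  fin_cases x <;> ext i j <;> fin_cases i <;> fin_cases j <;> simp [pauliQ, pauliR]

theorem toReal_k2Q (x y : Fin 4) : toReal (k2Q x y) = k2 x y := by
  ext i j
  simp [k2Q, k2, kprod, Fin.prod_univ_two, ← map_pauliQ]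

theorem toReal_transpose (U : EMatQ) : toReal Uᵀ = (toReal U)ᵀ :=
  (transpose_map ..).symm

section Kronecker

variable {m : ℕ}

theorem kprod_mul (f g : Fin m → Matrix (Fin 2) (Fin 2) ℝ) :
    kprod m f * kprod m g = kprod m (f * g) := by
  ext i j
  simp only [kprod, mul_apply, of_apply, Pi.mul_apply, Finset.prod_univ_sum,
    Fintype.piFinset_univ, ← Finset.prod_mul_distrib]

theorem kprod_zsmul (ε : Fin m → ℤˣ) (f : Fin m → Matrix (Fin 2) (Fin 2) ℝ) :
    kprod m (fun a => (ε a : ℤ) • f a) = ((∏ a, ε a : ℤˣ) : ℤ) • kprod m f := by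
  ext i j
  simp [kprod, Finset.prod_mul_distrib]

theorem kprod_one : kprod m (fun _ => 1) = 1 := by
  ext i j
  simp [kprod, one_apply, Finset.prod_ite_zero, funext_iff]

end Kronecker

theorem pauliR_zero : pauliR 0 = 1 := rfl

theorem pauliR_mul_pauliR (x z : Fin 4) :
    ∃ (ε : ℤˣ) (w : Fin 4), pauliR x * pauliR z = (ε : ℤ) • pauliR w := by
  -- Rational arithmetic does not reduce in the elaborator, hence `+kernel` here and below.
  have hQ : ∀ x z : Fin 4, ∃ (ε : ℤˣ) (w : Fin 4), pauliQ x * pauliQ z = (ε : ℤ) • pauliQ w := by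
    decide +kernel
  obtain ⟨ε, w, h⟩ := hQ x z
  refine ⟨ε, w, ?_⟩
  simpa only [map_mul, map_zsmul, map_pauliQ] using congrArg (Rat.castHom ℝ).mapMatrix h

section Esp

variable {m : ℕ}

theorem mem_Esp_iff {h : EMat m} :
    h ∈ Esp m ↔ ∃ (ε : ℤˣ) (v : Fin m → Fin 4), (ε : ℤ) • kprod m (fun b => pauliR (v b)) = h := by
  simp only [Esp, Finset.mem_image, Finset.mem_univ, true_and, Prod.exists]
  constructor
  · rintro ⟨s, v, rfl⟩
    exact ⟨if s then -1 else 1, v, by cases s <;> simp⟩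
  · rintro ⟨ε, v, rfl⟩
    rcases Int.units_eq_one_or ε with rfl | rfl
    exacts [⟨false, v, by simp⟩, ⟨true, v, by simp⟩]

theorem mul_mem_Esp {g h : EMat m} (hg : g ∈ Esp m) (hh : h ∈ Esp m) : g * h ∈ Esp m := by
  obtain ⟨ε, v, rfl⟩ := mem_Esp_iff.1 hg
  obtain ⟨δ, w, rfl⟩ := mem_Esp_iff.1 hh
  choose η u hu using fun a => pauliR_mul_pauliR (v a) (w a)
  refine mem_Esp_iff.2 ⟨ε * δ * ∏ a, η a, u, ?_⟩
  rw [smul_mul_smul_comm, kprod_mul, Pi.mul_def, funext hu, kprod_zsmul, smul_smul]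
  push_cast
  rfl

variable (m) in
theorem one_mem_Esp : 1 ∈ Esp m :=
  mem_Esp_iff.2 ⟨1, fun _ => 0, by simpa [pauliR_zero] using kprod_one⟩

variable (m) in
theorem neg_one_mem_Esp : -1 ∈ Esp m :=
  mem_Esp_iff.2 ⟨-1, fun _ => 0, by simpa [pauliR_zero] using kprod_one⟩

variable (m) in
def espSubmonoid : Submonoid (EMat m) where
  carrier := Esp m
  mul_mem' := mul_mem_Esp
  one_mem' := one_mem_Esp m

theorem mem_espSubmonoid {h : EMat m} : h ∈ espSubmonoid m ↔ h ∈ Esp m := Iff.rfl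

end Esp

theorem kprod_two (v : Fin 2 → Fin 4) : kprod 2 (fun b => pauliR (v b)) = k2 (v 0) (v 1) := by
  unfold k2
  congr with b
  fin_cases b <;> rfl

theorem k2_mem_Esp (x y : Fin 4) : k2 x y ∈ Esp 2 :=
  mem_Esp_iff.2 ⟨1, ![x, y], by simp [kprod_two]⟩

theorem k2_zero_zero : k2 0 0 = 1 := by
  simpa [← pauliR_zero, kprod_two] using kprod_one (m := 2)

theorem k2_mul_k2 {x y z w u v : Fin 4} (hx : pauliR x * pauliR z = pauliR u)
    (hy : pauliR y * pauliR w = pauliR v) : k2 x y * k2 z w = k2 u v := by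
  rw [k2, k2, kprod_mul, k2]
  congr 1
  funext b
  fin_cases b
  exacts [hx, hy]

theorem k2_mul_k2_zero (x y : Fin 4) : k2 x 0 * k2 0 y = k2 x y :=
  k2_mul_k2 (mul_one (pauliR x)) (one_mul (pauliR y))

theorem espSubmonoid_two_eq_closure :
    espSubmonoid 2 = Submonoid.closure {-1, k2 1 0, k2 2 0, k2 0 1, k2 0 2} := by
  set S := Submonoid.closure ({-1, k2 1 0, k2 2 0, k2 0 1, k2 0 2} : Set (EMat 2))
  apply le_antisymm
  · have hneg : (-1 : EMat 2) ∈ S := Submonoid.subset_closure (by simp)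
    have h₁ : k2 1 0 ∈ S := Submonoid.subset_closure (by simp)
    have h₂ : k2 2 0 ∈ S := Submonoid.subset_closure (by simp)
    have h₃ : k2 0 1 ∈ S := Submonoid.subset_closure (by simp)
    have h₄ : k2 0 2 ∈ S := Submonoid.subset_closure (by simp)
    have hx (x : Fin 4) : k2 x 0 ∈ S := by
      fin_cases x
      exacts [k2_zero_zero ▸ S.one_mem, h₁, h₂,
        (k2_mul_k2 rfl (mul_one 1) : k2 1 0 * k2 2 0 = k2 3 0) ▸ S.mul_mem h₁ h₂]
    have hy (y : Fin 4) : k2 0 y ∈ S := by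
      fin_cases y
      exacts [k2_zero_zero ▸ S.one_mem, h₃, h₄,
        (k2_mul_k2 (mul_one 1) rfl : k2 0 1 * k2 0 2 = k2 0 3) ▸ S.mul_mem h₃ h₄]
    intro h hh
    obtain ⟨ε, v, rfl⟩ := mem_Esp_iff.1 hh
    rw [kprod_two, ← k2_mul_k2_zero]
    rcases Int.units_eq_one_or ε with rfl | rfl
    · simpa using S.mul_mem (hx _) (hy _)
    · simpa using S.mul_mem hneg (S.mul_mem (hx _) (hy _))
  · rw [Submonoid.closure_le]
    rintro g (rfl | rfl | rfl | rfl | rfl)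
    exacts [neg_one_mem_Esp 2, k2_mem_Esp .., k2_mem_Esp .., k2_mem_Esp .., k2_mem_Esp ..]

section Conjugation

variable {n R : Type*} [Fintype n] [DecidableEq n] [CommRing R] {U : Matrix n n R}

def conjOrthogonal (hU : Uᵀ * U = 1) : Matrix n n R →* Matrix n n R where
  toFun h := U * h * Uᵀ
  map_one' := by rw [mul_one, mul_eq_one_comm.1 hU]
  map_mul' g h := by
    rw [show U * g * Uᵀ * (U * h * Uᵀ) = U * g * (Uᵀ * U) * h * Uᵀ by noncomm_ring, hU, mul_one,
      mul_assoc U g]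

theorem mem_iff_conj_mem_of_mapsTo (hU : Uᵀ * U = 1) {S : Finset (Matrix n n R)}
    (hS : ∀ h ∈ S, U * h * Uᵀ ∈ S) (h : Matrix n n R) : h ∈ S ↔ U * h * Uᵀ ∈ S := by
  refine ⟨hS h, fun hh => ?_⟩
  have hinj : Function.Injective fun h => U * h * Uᵀ := fun a b hab => by
    simpa only [← mul_assoc, hU, one_mul, mul_assoc _ Uᵀ U, mul_one] using
      congrArg (fun M => Uᵀ * M * U) hab
  obtain ⟨h', h'S, hh'⟩ := Finset.surjOn_of_injOn_of_card_le _ hS hinj.injOn le_rfl hh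
  rwa [← hinj hh']

end Conjugation

theorem inNormE2_of_conj_generators {U : EMat 2} (hU : Uᵀ * U = 1)
    (h₁ : U * k2 1 0 * Uᵀ ∈ Esp 2) (h₂ : U * k2 2 0 * Uᵀ ∈ Esp 2)
    (h₃ : U * k2 0 1 * Uᵀ ∈ Esp 2) (h₄ : U * k2 0 2 * Uᵀ ∈ Esp 2) : inNormE2 U := by
  have hmaps : espSubmonoid 2 ≤ (espSubmonoid 2).comap (conjOrthogonal hU) := by
    conv_lhs => rw [espSubmonoid_two_eq_closure]
    rw [Submonoid.closure_le]
    rintro g (rfl | rfl | rfl | rfl | rfl)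
    · simpa [conjOrthogonal, mul_eq_one_comm.1 hU, mem_espSubmonoid] using neg_one_mem_Esp 2
    exacts [h₁, h₂, h₃, h₄]
  exact ⟨mul_eq_one_comm.1 hU, hU, mem_iff_conj_mem_of_mapsTo hU hmaps⟩

theorem inNormE2_toReal {U : EMatQ} (hU : Uᵀ * U = 1)
    (h₁ : ∃ x y, U * k2Q 1 0 * Uᵀ = k2Q x y) (h₂ : ∃ x y, U * k2Q 2 0 * Uᵀ = k2Q x y)
    (h₃ : ∃ x y, U * k2Q 0 1 * Uᵀ = k2Q x y) (h₄ : ∃ x y, U * k2Q 0 2 * Uᵀ = k2Q x y) :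
    inNormE2 (toReal U) := by
  have hmem {a b : Fin 4} (h : ∃ x y, U * k2Q a b * Uᵀ = k2Q x y) :
      toReal U * k2 a b * (toReal U)ᵀ ∈ Esp 2 := by
    obtain ⟨x, y, h⟩ := h
    simpa only [← toReal_k2Q, ← toReal_transpose, ← map_mul, h] using k2_mem_Esp x y
  refine inNormE2_of_conj_generators ?_ (hmem h₁) (hmem h₂) (hmem h₃) (hmem h₄)
  rw [← toReal_transpose, ← map_mul, hU, map_one]

theorem toReal_transpose_mul_k2_mul {U : EMatQ} {x y a b : Fin 4}
    (h : Uᵀ * k2Q x y * U = k2Q a b) : (toReal U)ᵀ * k2 x y * toReal U = k2 a b := by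
  rw [← toReal_transpose, ← toReal_k2Q, ← toReal_k2Q, ← map_mul, ← map_mul, h]

def cnotQ : EMatQ := of fun i j => if j = ![i 0 + i 1, i 1] then 1 else 0

def czQ : EMatQ := diagonal fun i => (-1) ^ (i 0 * i 1).val

def hadamardQ : EMatQ := of fun i j => (-1) ^ (i ⬝ᵥ j).val / 2

theorem inNormE2_cnot : inNormE2 (toReal cnotQ) := by
  apply inNormE2_toReal <;> decide +kernel

theorem inNormE2_cz : inNormE2 (toReal czQ) := by
  apply inNormE2_toReal <;> decide +kernel

theorem inNormE2_hadamard : inNormE2 (toReal hadamardQ) := by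
  apply inNormE2_toReal <;> decide +kernel

/-- There exist orthogonal matrices `U₁, …, U₆` normalizing `E(2)` realizing the conjugations
`σ₃⊗σ₃ ∼ σ₂⊗σ₁`, `σ₁⊗σ₁ ∼ 1₂⊗σ₁`, `σ₂⊗σ₁ ∼ 1₂⊗σ₁`, `σ₂⊗σ₂ ∼ σ₂⊗1₂`,
`σ₁⊗1₂ ∼ σ₂⊗1₂` together with `σ₁⊗σ₁ ∼ σ₂⊗σ₂`, and `σ₃⊗σ₂ ∼ σ₃⊗1₂`. -/
theorem esp2_conjugations :
    ∃ U₁ U₂ U₃ U₄ U₅ U₆ : EMat 2,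
      inNormE2 U₁ ∧ inNormE2 U₂ ∧ inNormE2 U₃ ∧ inNormE2 U₄ ∧ inNormE2 U₅ ∧ inNormE2 U₆ ∧
      U₁ᵀ * k2 3 3 * U₁ = k2 2 1 ∧
      U₂ᵀ * k2 1 1 * U₂ = k2 0 1 ∧
      U₃ᵀ * k2 2 1 * U₃ = k2 0 1 ∧
      U₄ᵀ * k2 2 2 * U₄ = k2 2 0 ∧
      (U₅ᵀ * k2 1 0 * U₅ = k2 2 0 ∧ U₅ᵀ * k2 1 1 * U₅ = k2 2 2) ∧
      U₆ᵀ * k2 3 2 * U₆ = k2 3 0 := by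
  refine ⟨toReal cnotQ, toReal cnotQ, toReal czQ, toReal cnotQ, toReal hadamardQ, toReal cnotQ,
    inNormE2_cnot, inNormE2_cnot, inNormE2_cz, inNormE2_cnot, inNormE2_hadamard, inNormE2_cnot,
    ?_, ?_, ?_, ?_, ⟨?_, ?_⟩, ?_⟩ <;>
  exact toReal_transpose_mul_k2_mul (by decide +kernel)
end
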